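/- arXiv:1610.09132 — 3 statements merged into one kernel-verified Lean document; each statement's English description precedes it below -/
import Mathlib

section
/- The sum over all c offsets of the candidate costs decomposes as Σ_{j=0}^{c−1} SOL_j = Σ_{i=1}^n ‖s_i − t_i‖ + (c−1) · Σ_{i=1}^n ( ‖s_{σ(i)} − s_{σ(i+1)}‖ + ‖t_{σ(i)} − t_{σ(i+1)}‖ ), where indices are taken cyclically (σ(n+1) means σ(1)). -/
open scoped BigOperators

noncomputable section

/-- `d`-dimensional Euclidean space `ℝ^d`. -/
abbrev Pt (d : ℕ) := EuclideanSpace ℝ (Fin d)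

/-- The distance between the requests `r_i = (s_i, t_i)` and `r_j = (s_j, t_j)` viewed as
points of `ℝ^{2d}` with the Euclidean norm: `‖r_i − r_j‖ = √(‖s_i − s_j‖² + ‖t_i − t_j‖²)`. -/
def reqDist {d n : ℕ} (s t : ZMod n → Pt d) (i j : ZMod n) : ℝ :=
  Real.sqrt (‖s i - s j‖ ^ 2 + ‖t i - t j‖ ^ 2)

/-- The length `‖T‖` of the tour given by the permutation `σ` (indices cyclic mod `n`):
`‖T‖ = Σ_{i} ‖r_{σ(i)} − r_{σ(i+1)}‖` in `ℝ^{2d}`. -/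
def tourLength {d n : ℕ} (s t : ZMod n → Pt d) (σ : Equiv.Perm (ZMod n)) : ℝ :=
  ∑ i ∈ Finset.range n, reqDist s t (σ (i : ZMod n)) (σ ((i : ZMod n) + 1))

/-- The LIFO trip cost of the group of `c` consecutive requests starting at cyclic
position `a`: pick up `σ(a), σ(a+1), …, σ(a+c−1)` in tour order and deliver in reverse. -/
def lifoCost {d n : ℕ} (s t : ZMod n → Pt d) (σ : Equiv.Perm (ZMod n)) (c : ℕ)
    (a : ZMod n) : ℝ :=
  (∑ i ∈ Finset.range (c - 1), ‖s (σ (a + (i : ZMod n))) - s (σ (a + (i : ZMod n) + 1))‖)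
    + ‖s (σ (a + ((c - 1 : ℕ) : ZMod n))) - t (σ (a + ((c - 1 : ℕ) : ZMod n)))‖
    + ∑ i ∈ Finset.range (c - 1), ‖t (σ (a + (i : ZMod n) + 1)) - t (σ (a + (i : ZMod n)))‖

/-- For offset `j`, the `g`-th group of `c` consecutive requests starts at cyclic position
`j + 1 + g·c`. -/
def groupStart (n c j g : ℕ) : ZMod n := ((j + 1 + g * c : ℕ) : ZMod n)

/-- The candidate cost `SOL_j`: the cyclic sequence `σ(j+1), …, σ(j+n)` is split into `m`
consecutive groups of `c` requests, and `SOL_j` is the sum of their LIFO trip costs. -/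
def SOLcost {d n : ℕ} (s t : ZMod n → Pt d) (σ : Equiv.Perm (ZMod n)) (c m j : ℕ) : ℝ :=
  ∑ g ∈ Finset.range m, lifoCost s t σ c (groupStart n c j g)

/-- A (nonpreemptive) plan serving the `n` requests `(s_i, t_i)` with a single vehicle of
capacity `c`: a finite route `p_0, p_1, …, p_M` in `ℝ^d`, with pickup step `a i` and
delivery step `b i` for each request `i` (object `i` is on board during steps `k` with
`a i ≤ k < b i`), such that the load never exceeds `c`. -/
structure Plan (d n c : ℕ) (s t : Fin n → Pt d) where
  M : ℕ
  p : ℕ → Pt d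
  a : Fin n → ℕ
  b : Fin n → ℕ
  hab : ∀ i, a i < b i
  hbM : ∀ i, b i ≤ M
  hstart : ∀ i, p (a i) = s i
  hend : ∀ i, p (b i) = t i
  hcap : ∀ k : ℕ, (Finset.univ.filter fun i => a i ≤ k ∧ k < b i).card ≤ c

/-- The load (number of objects on board) of the plan at step `k`. -/
def Plan.load {d n c : ℕ} {s t : Fin n → Pt d} (P : Plan d n c s t) (k : ℕ) : ℕ :=
  (Finset.univ.filter fun i => P.a i ≤ k ∧ k < P.b i).card

/-- The carried cost of a plan: the distance traveled while carrying at least one object. -/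
def Plan.carriedCost {d n c : ℕ} {s t : Fin n → Pt d} (P : Plan d n c s t) : ℝ :=
  ∑ k ∈ Finset.range P.M, if 1 ≤ P.load k then ‖P.p (k + 1) - P.p k‖ else 0

/-- The total cost of a plan: the total distance traveled by the vehicle. -/
def Plan.totalCost {d n c : ℕ} {s t : Fin n → Pt d} (P : Plan d n c s t) : ℝ :=
  ∑ k ∈ Finset.range P.M, ‖P.p (k + 1) - P.p k‖

private lemma doubleSum (c m : ℕ) (hc : 0 < c) (F : ℕ → ℝ) :
    ∑ j ∈ Finset.range c, ∑ g ∈ Finset.range m, F (j + g * c)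
      = ∑ k ∈ Finset.range (m * c), F k := by
  rw [← Finset.sum_product']
  apply Finset.sum_nbij' (i := fun p => p.1 + p.2 * c) (j := fun k => (k % c, k / c))
  · rintro ⟨j, g⟩ hp
    simp only [Finset.mem_product, Finset.mem_range] at hp ⊢
    calc j + g * c < c + g * c := by omega
      _ = (g + 1) * c := by ring
      _ ≤ m * c := Nat.mul_le_mul_right c hp.2
  · intro k hk
    simp only [Finset.mem_range] at hk
    simp only [Finset.mem_product, Finset.mem_range]
    exact ⟨Nat.mod_lt _ hc, Nat.div_lt_of_lt_mul (by rw [mul_comm]; omega)⟩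
  · rintro ⟨j, g⟩ hp
    simp only [Finset.mem_product, Finset.mem_range] at hp
    simp [Nat.add_mul_mod_self_right, Nat.mod_eq_of_lt hp.1,
      Nat.add_mul_div_right _ _ hc, Nat.div_eq_of_lt hp.1]
  · intro k _; simp [Nat.mod_add_div' k c]
  · intros; rfl

private lemma sum_range_zmod (n : ℕ) [NeZero n] (F : ZMod n → ℝ) :
    ∑ k ∈ Finset.range n, F (k : ZMod n) = ∑ x : ZMod n, F x := by
  refine Finset.sum_nbij' (fun k => (k : ZMod n)) (fun x => x.val) ?_ ?_ ?_ ?_ ?_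
  · intros; exact Finset.mem_univ _
  · intro x _; exact Finset.mem_range.2 (ZMod.val_lt x)
  · intro k hk; exact ZMod.val_cast_of_lt (Finset.mem_range.1 hk)
  · intro x _; exact ZMod.natCast_zmod_val x
  · intros; rfl

private lemma sum_shift (n : ℕ) [NeZero n] (F : ZMod n → ℝ) (a : ZMod n) :
    ∑ k ∈ Finset.range n, F ((k : ZMod n) + a) = ∑ k ∈ Finset.range n, F (k : ZMod n) := by
  rw [sum_range_zmod n (fun x => F (x + a)), sum_range_zmod n F]
  exact Fintype.sum_equiv (Equiv.addRight a) _ _ (fun x => rfl)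

private lemma key (m c n : ℕ) (hc : 0 < c) (hn : n = m * c) [NeZero n]
    (F : ZMod n → ℝ) (a : ZMod n) :
    ∑ j ∈ Finset.range c, ∑ g ∈ Finset.range m, F (((j + g * c : ℕ) : ZMod n) + a)
      = ∑ k ∈ Finset.range n, F (k : ZMod n) := by
  rw [doubleSum c m hc (fun k => F ((k : ZMod n) + a)), ← hn]
  exact sum_shift n F a

/-- the sum over all `c` offsets of the candidate costs decomposes as
`Σ_{j=0}^{c−1} SOL_j = Σ_i ‖s_i − t_i‖ + (c−1)·Σ_i (‖s_{σ(i)} − s_{σ(i+1)}‖ + ‖t_{σ(i)} − t_{σ(i+1)}‖)`,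
indices taken cyclically. -/
theorem stmt_1 (d c m : ℕ) (hd : 1 ≤ d) (hc : 1 ≤ c) (hm : 1 ≤ m) (n : ℕ) (hn : n = m * c)
    (s t : ZMod n → Pt d) (σ : Equiv.Perm (ZMod n)) :
    ∑ j ∈ Finset.range c, SOLcost s t σ c m j
      = (∑ i ∈ Finset.range n, ‖s (i : ZMod n) - t (i : ZMod n)‖)
        + ((c : ℝ) - 1) * ∑ i ∈ Finset.range n,
            (‖s (σ (i : ZMod n)) - s (σ ((i : ZMod n) + 1))‖
              + ‖t (σ (i : ZMod n)) - t (σ ((i : ZMod n) + 1))‖) := by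
  have hn0 : 0 < n := hn ▸ Nat.mul_pos hm hc
  haveI : NeZero n := ⟨hn0.ne'⟩
  have harg1 : ∀ j g i : ℕ,
      groupStart n c j g + (i : ZMod n) = ((j + g * c : ℕ) : ZMod n) + ((i : ZMod n) + 1) := by
    intro j g i; simp only [groupStart]; push_cast; ring
  have harg2 : ∀ j g : ℕ,
      groupStart n c j g + ((c - 1 : ℕ) : ZMod n) = ((j + g * c : ℕ) : ZMod n) + (c : ZMod n) := by
    intro j g; simp only [groupStart]; push_cast [Nat.cast_sub hc]; ring
  have hA : ∀ E : ZMod n → ℝ,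
      ∑ j ∈ Finset.range c, ∑ g ∈ Finset.range m, ∑ i ∈ Finset.range (c - 1),
          E (((j + g * c : ℕ) : ZMod n) + ((i : ZMod n) + 1))
        = (c - 1) • ∑ k ∈ Finset.range n, E (k : ZMod n) := by
    intro E
    calc ∑ j ∈ Finset.range c, ∑ g ∈ Finset.range m, ∑ i ∈ Finset.range (c - 1),
          E (((j + g * c : ℕ) : ZMod n) + ((i : ZMod n) + 1))
        = ∑ j ∈ Finset.range c, ∑ i ∈ Finset.range (c - 1), ∑ g ∈ Finset.range m,
          E (((j + g * c : ℕ) : ZMod n) + ((i : ZMod n) + 1)) :=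
          Finset.sum_congr rfl fun j _ => Finset.sum_comm
      _ = ∑ i ∈ Finset.range (c - 1), ∑ j ∈ Finset.range c, ∑ g ∈ Finset.range m,
          E (((j + g * c : ℕ) : ZMod n) + ((i : ZMod n) + 1)) := Finset.sum_comm
      _ = ∑ i ∈ Finset.range (c - 1), ∑ k ∈ Finset.range n, E (k : ZMod n) :=
          Finset.sum_congr rfl fun i _ => key m c n hc hn E ((i : ZMod n) + 1)
      _ = (c - 1) • ∑ k ∈ Finset.range n, E (k : ZMod n) := by
          rw [Finset.sum_const, Finset.card_range]
  simp only [SOLcost, lifoCost, harg1, harg2]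
  simp only [Finset.sum_add_distrib]
  rw [hA (fun x => ‖s (σ x) - s (σ (x + 1))‖),
    hA (fun x => ‖t (σ (x + 1)) - t (σ x)‖),
    key m c n hc hn (fun x => ‖s (σ x) - t (σ x)‖) (((c - 1 : ℕ) : ZMod n) + 1)]
  have hB : ∑ k ∈ Finset.range n, ‖s (σ (k : ZMod n)) - t (σ (k : ZMod n))‖
      = ∑ i ∈ Finset.range n, ‖s (i : ZMod n) - t (i : ZMod n)‖ := by
    rw [sum_range_zmod n (fun x => ‖s (σ x) - t (σ x)‖),
      sum_range_zmod n (fun x => ‖s x - t x‖)]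
    exact Equiv.sum_comp σ fun x => ‖s x - t x‖
  have ht : ∑ k ∈ Finset.range n, ‖t (σ ((k : ZMod n) + 1)) - t (σ (k : ZMod n))‖
      = ∑ k ∈ Finset.range n, ‖t (σ (k : ZMod n)) - t (σ ((k : ZMod n) + 1))‖ :=
    Finset.sum_congr rfl fun k _ => norm_sub_rev _ _
  rw [hB, ht]
  simp only [nsmul_eq_mul, Nat.cast_sub hc, Nat.cast_one]
  ring
end
end

section
/- (Lemma 1) The best of the c candidate LIFO plans satisfies min_{0 ≤ j ≤ c−1} SOL_j ≤ (1/c) · Σ_{i=1}^n ‖s_i − t_i‖ + √2 · ((c−1)/c) · ‖T‖. -/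
open scoped BigOperators

noncomputable section

lemma aux_add_le_sqrt2 (a b : ℝ) (ha : 0 ≤ a) (hb : 0 ≤ b) :
    a + b ≤ Real.sqrt 2 * Real.sqrt (a^2 + b^2) := by
  rw [← Real.sqrt_mul (by norm_num)]
  rw [show a + b = Real.sqrt ((a+b)^2) from (Real.sqrt_sq (by positivity)).symm]
  apply Real.sqrt_le_sqrt
  nlinarith [sq_nonneg (a - b)]

lemma aux_sum_range_zmod {n : ℕ} [NeZero n] (f : ZMod n → ℝ) :
    ∑ i ∈ Finset.range n, f (i : ZMod n) = ∑ x : ZMod n, f x := by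
  refine Finset.sum_nbij' (i := fun k => (k : ZMod n)) (j := fun x => x.val) ?_ ?_ ?_ ?_ ?_
  · intro k hk; exact Finset.mem_univ _
  · intro x hx; simpa [Finset.mem_range] using ZMod.val_lt x
  · intro k hk; exact ZMod.val_cast_of_lt (Finset.mem_range.mp hk)
  · intro x hx; simp [ZMod.natCast_val, ZMod.cast_id]
  · intro k hk; rfl

lemma aux_sum_shift {n : ℕ} [NeZero n] (f : ZMod n → ℝ) (a : ZMod n) :
    ∑ x : ZMod n, f (x + a) = ∑ x : ZMod n, f x :=
  Fintype.sum_equiv (Equiv.addRight a) _ _ (fun _ => rfl)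

lemma aux_sum_double (c m : ℕ) (hc : 0 < c) (h : ℕ → ℝ) :
    ∑ j ∈ Finset.range c, ∑ g ∈ Finset.range m, h (j + g * c)
      = ∑ k ∈ Finset.range (m * c), h k := by
  rw [← Finset.sum_product']
  refine Finset.sum_nbij' (i := fun p => p.1 + p.2 * c) (j := fun k => (k % c, k / c)) ?_ ?_ ?_ ?_ ?_
  · rintro ⟨j, g⟩ hp
    simp only [Finset.mem_product, Finset.mem_range] at hp ⊢
    calc j + g * c < c + g * c := by omega
      _ = (g + 1) * c := by ring
      _ ≤ m * c := Nat.mul_le_mul_right c hp.2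
  · intro k hk
    simp only [Finset.mem_range] at hk
    simp only [Finset.mem_product, Finset.mem_range]
    exact ⟨Nat.mod_lt _ hc, (Nat.div_lt_iff_lt_mul hc).mpr hk⟩
  · rintro ⟨j, g⟩ hp
    simp only [Finset.mem_product, Finset.mem_range] at hp
    simp [Nat.add_mul_mod_self_right, Nat.mod_eq_of_lt hp.1,
      Nat.add_mul_div_right _ _ hc, Nat.div_eq_of_lt hp.1]
  · intro k hk; simp [Nat.mod_add_div']
  · intro p hp; rfl

set_option maxHeartbeats 1000000 in
/-- Lemma 1: the best of the `c` candidate LIFO plans satisfies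
`min_{0 ≤ j ≤ c−1} SOL_j ≤ (1/c)·Σ_i ‖s_i − t_i‖ + √2·((c−1)/c)·‖T‖`. -/
theorem stmt_3 (d c m : ℕ) (hd : 1 ≤ d) (hc : 0 < c) (hm : 1 ≤ m) (n : ℕ) (hn : n = m * c)
    (s t : ZMod n → Pt d) (σ : Equiv.Perm (ZMod n)) :
    (Finset.range c).inf' (Finset.nonempty_range_iff.mpr hc.ne')
        (fun j => SOLcost s t σ c m j)
      ≤ (1 / (c : ℝ)) * (∑ i ∈ Finset.range n, ‖s (i : ZMod n) - t (i : ZMod n)‖)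
        + Real.sqrt 2 * (((c : ℝ) - 1) / (c : ℝ)) * tourLength s t σ := by
  haveI : NeZero n := ⟨by rw [hn]; exact Nat.mul_ne_zero (by omega) (by omega)⟩
  have hsum : ∑ j ∈ Finset.range c, SOLcost s t σ c m j
      = ∑ x : ZMod n, lifoCost s t σ c x := by
    have h1 : ∀ j g : ℕ, groupStart n c j g = (((j + g * c : ℕ) : ZMod n) + 1) := by
      intro j g; unfold groupStart; push_cast; ring
    calc ∑ j ∈ Finset.range c, SOLcost s t σ c m j
        = ∑ j ∈ Finset.range c, ∑ g ∈ Finset.range m,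
            lifoCost s t σ c (((j + g * c : ℕ) : ZMod n) + 1) := by
          unfold SOLcost; simp only [h1]
      _ = ∑ k ∈ Finset.range (m * c), lifoCost s t σ c ((k : ZMod n) + 1) :=
          aux_sum_double c m hc (fun k => lifoCost s t σ c ((k : ZMod n) + 1))
      _ = ∑ x : ZMod n, lifoCost s t σ c (x + 1) := by
          rw [← hn]; exact aux_sum_range_zmod (fun x => lifoCost s t σ c (x + 1))
      _ = ∑ x : ZMod n, lifoCost s t σ c x := aux_sum_shift _ 1
  have hsplit : ∑ x : ZMod n, lifoCost s t σ c x
      = (c - 1) • (∑ y : ZMod n, ‖s (σ y) - s (σ (y + 1))‖)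
        + (∑ i ∈ Finset.range n, ‖s (i : ZMod n) - t (i : ZMod n)‖)
        + (c - 1) • (∑ y : ZMod n, ‖t (σ (y + 1)) - t (σ y)‖) := by
    unfold lifoCost
    rw [Finset.sum_add_distrib, Finset.sum_add_distrib]
    congr 1
    · congr 1
      · rw [Finset.sum_comm]
        have hcg : ∀ i ∈ Finset.range (c - 1),
            ∑ x : ZMod n, ‖s (σ (x + (i : ZMod n))) - s (σ (x + (i : ZMod n) + 1))‖
              = ∑ y : ZMod n, ‖s (σ y) - s (σ (y + 1))‖ :=
          fun i _ => aux_sum_shift (fun y => ‖s (σ y) - s (σ (y + 1))‖) (i : ZMod n)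
        rw [Finset.sum_congr rfl hcg, Finset.sum_const, Finset.card_range]
      · rw [aux_sum_shift (fun y => ‖s (σ y) - t (σ y)‖) ((c - 1 : ℕ) : ZMod n)]
        rw [Equiv.sum_comp σ (fun z => ‖s z - t z‖)]
        exact (aux_sum_range_zmod (fun z => ‖s z - t z‖)).symm
    · rw [Finset.sum_comm]
      have hcg : ∀ i ∈ Finset.range (c - 1),
          ∑ x : ZMod n, ‖t (σ (x + (i : ZMod n) + 1)) - t (σ (x + (i : ZMod n)))‖
            = ∑ y : ZMod n, ‖t (σ (y + 1)) - t (σ y)‖ :=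
        fun i _ => aux_sum_shift (fun y => ‖t (σ (y + 1)) - t (σ y)‖) (i : ZMod n)
      rw [Finset.sum_congr rfl hcg, Finset.sum_const, Finset.card_range]
  have htl : tourLength s t σ = ∑ x : ZMod n, reqDist s t (σ x) (σ (x + 1)) := by
    unfold tourLength
    exact aux_sum_range_zmod (fun x => reqDist s t (σ x) (σ (x + 1)))
  have hST : (∑ y : ZMod n, ‖s (σ y) - s (σ (y + 1))‖)
      + (∑ y : ZMod n, ‖t (σ (y + 1)) - t (σ y)‖)
      ≤ Real.sqrt 2 * tourLength s t σ := by
    rw [← Finset.sum_add_distrib, htl, Finset.mul_sum]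
    apply Finset.sum_le_sum
    intro y _
    rw [norm_sub_rev (t (σ (y + 1)))]
    simp only [reqDist]
    exact aux_add_le_sqrt2 _ _ (norm_nonneg _) (norm_nonneg _)
  have hmain : ∑ j ∈ Finset.range c, SOLcost s t σ c m j
      ≤ (∑ i ∈ Finset.range n, ‖s (i : ZMod n) - t (i : ZMod n)‖)
        + ((c : ℝ) - 1) * (Real.sqrt 2 * tourLength s t σ) := by
    rw [hsum, hsplit, nsmul_eq_mul, nsmul_eq_mul]
    have h1 : ((c - 1 : ℕ) : ℝ) = (c : ℝ) - 1 := by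
      rw [Nat.cast_sub hc]; simp
    rw [h1]
    have h2 : ((c : ℝ) - 1) * ((∑ y : ZMod n, ‖s (σ y) - s (σ (y + 1))‖)
        + (∑ y : ZMod n, ‖t (σ (y + 1)) - t (σ y)‖))
        ≤ ((c : ℝ) - 1) * (Real.sqrt 2 * tourLength s t σ) := by
      apply mul_le_mul_of_nonneg_left hST
      have : (1 : ℝ) ≤ (c : ℝ) := by exact_mod_cast hc
      linarith
    linarith
  have hcpos : (0 : ℝ) < c := by exact_mod_cast hc
  have hinf : (c : ℝ) * (Finset.range c).inf' (Finset.nonempty_range_iff.mpr hc.ne')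
      (fun j => SOLcost s t σ c m j) ≤ ∑ j ∈ Finset.range c, SOLcost s t σ c m j := by
    have := Finset.card_nsmul_le_sum (Finset.range c) (fun j => SOLcost s t σ c m j)
      ((Finset.range c).inf' (Finset.nonempty_range_iff.mpr hc.ne')
        (fun j => SOLcost s t σ c m j))
      (fun j hj => Finset.inf'_le _ hj)
    simpa [nsmul_eq_mul] using this
  rw [← mul_le_mul_iff_right₀ hcpos]
  calc (c : ℝ) * (Finset.range c).inf' (Finset.nonempty_range_iff.mpr hc.ne')
        (fun j => SOLcost s t σ c m j)
      ≤ ∑ j ∈ Finset.range c, SOLcost s t σ c m j := hinf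
    _ ≤ (∑ i ∈ Finset.range n, ‖s (i : ZMod n) - t (i : ZMod n)‖)
        + ((c : ℝ) - 1) * (Real.sqrt 2 * tourLength s t σ) := hmain
    _ = (c : ℝ) * ((1 / (c : ℝ)) * (∑ i ∈ Finset.range n, ‖s (i : ZMod n) - t (i : ZMod n)‖)
        + Real.sqrt 2 * (((c : ℝ) - 1) / (c : ℝ)) * tourLength s t σ) := by
      field_simp
end
end

section
/- For every offset j ∈ {0,1,…,c−1}, the candidate cost satisfies SOL_j ≥ (1/c) · Σ_{i=1}^n ‖s_i − t_i‖. -/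
open scoped BigOperators

noncomputable section

lemma path_bound {E : Type*} [SeminormedAddCommGroup E] (w : ℕ → E) {i N : ℕ} (h : i ≤ N) :
    ‖w i - w N‖ ≤ ∑ k ∈ Finset.range N, ‖w k - w (k + 1)‖ := by
  calc ‖w i - w N‖ = dist (w i) (w N) := (dist_eq_norm _ _).symm
    _ ≤ ∑ k ∈ Finset.Ico i N, dist (w k) (w (k + 1)) := dist_le_Ico_sum_dist _ h
    _ ≤ ∑ k ∈ Finset.range N, dist (w k) (w (k + 1)) := by
        apply Finset.sum_le_sum_of_subset_of_nonneg
        · intro x hx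
          simp only [Finset.mem_Ico] at hx
          simp only [Finset.mem_range]
          exact hx.2
        · intros; exact dist_nonneg
    _ = _ := by simp [dist_eq_norm]

lemma lifo_ge {d n : ℕ} (s t : ZMod n → Pt d) (σ : Equiv.Perm (ZMod n)) (c : ℕ)
    (a : ZMod n) {i : ℕ} (hi : i < c) :
    ‖s (σ (a + (i : ZMod n))) - t (σ (a + (i : ZMod n)))‖ ≤ lifoCost s t σ c a := by
  set u : ℕ → Pt d := fun k => s (σ (a + (k : ZMod n))) with hu
  set v : ℕ → Pt d := fun k => t (σ (a + (k : ZMod n))) with hv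
  have hi' : i ≤ c - 1 := by omega
  have h1 : ‖u i - u (c - 1)‖ ≤ ∑ k ∈ Finset.range (c - 1), ‖u k - u (k + 1)‖ :=
    path_bound u hi'
  have h2 : ‖v i - v (c - 1)‖ ≤ ∑ k ∈ Finset.range (c - 1), ‖v k - v (k + 1)‖ :=
    path_bound v hi'
  have key : ∀ k : ℕ, a + (k : ZMod n) + 1 = a + ((k + 1 : ℕ) : ZMod n) := by
    intro k; push_cast; ring
  have hlifo : lifoCost s t σ c a =
      (∑ k ∈ Finset.range (c - 1), ‖u k - u (k + 1)‖) + ‖u (c - 1) - v (c - 1)‖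
        + ∑ k ∈ Finset.range (c - 1), ‖v k - v (k + 1)‖ := by
    unfold lifoCost
    congr 1
    · congr 1
      refine Finset.sum_congr rfl fun k _ => ?_
      rw [key k]
    · refine Finset.sum_congr rfl fun k _ => ?_
      rw [key k, norm_sub_rev]
  have tri : ‖u i - v i‖ ≤ ‖u i - u (c - 1)‖ + ‖u (c - 1) - v (c - 1)‖ + ‖v (c - 1) - v i‖ := by
    have := dist_triangle4 (u i) (u (c - 1)) (v (c - 1)) (v i)
    simpa [dist_eq_norm] using this
  have := tri.trans (by
    rw [norm_sub_rev (v (c - 1))]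
    linarith [h1, h2] : ‖u i - u (c - 1)‖ + ‖u (c - 1) - v (c - 1)‖ + ‖v (c - 1) - v i‖
      ≤ (∑ k ∈ Finset.range (c - 1), ‖u k - u (k + 1)‖) + ‖u (c - 1) - v (c - 1)‖
        + ∑ k ∈ Finset.range (c - 1), ‖v k - v (k + 1)‖)
  rw [hlifo]
  exact this

lemma sum_range_cast_zmod {M : Type*} [AddCommMonoid M] (n : ℕ) [NeZero n] (F : ZMod n → M) :
    ∑ k ∈ Finset.range n, F (k : ZMod n) = ∑ x : ZMod n, F x := by
  refine Finset.sum_nbij' (fun k => (k : ZMod n)) (fun x => x.val) ?_ ?_ ?_ ?_ ?_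
  · intro k _; exact Finset.mem_univ _
  · intro x _; exact Finset.mem_range.2 (ZMod.val_lt x)
  · intro k hk; exact ZMod.val_cast_of_lt (Finset.mem_range.1 hk)
  · intro x _; exact ZMod.natCast_rightInverse x
  · intro k _; rfl

lemma sum_double_to_range {M : Type*} [AddCommMonoid M] (m c : ℕ) (hc : 0 < c) (H : ℕ → M) :
    ∑ g ∈ Finset.range m, ∑ i ∈ Finset.range c, H (g * c + i)
      = ∑ k ∈ Finset.range (m * c), H k := by
  rw [← Finset.sum_product']
  refine Finset.sum_nbij' (fun p => p.1 * c + p.2) (fun k => (k / c, k % c)) ?_ ?_ ?_ ?_ ?_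
  · rintro ⟨g, i⟩ hp
    simp only [Finset.mem_product, Finset.mem_range] at hp
    simp only [Finset.mem_range]
    calc g * c + i < g * c + c := by omega
      _ ≤ m * c := by
          have : g + 1 ≤ m := hp.1
          calc g * c + c = (g + 1) * c := by ring
            _ ≤ m * c := Nat.mul_le_mul_right c this
  · intro k hk
    simp only [Finset.mem_range] at hk
    simp only [Finset.mem_product, Finset.mem_range]
    exact ⟨Nat.div_lt_of_lt_mul (by rw [Nat.mul_comm]; exact hk), Nat.mod_lt _ hc⟩
  · rintro ⟨g, i⟩ hp
    simp only [Finset.mem_product, Finset.mem_range] at hp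
    have h1 : (g * c + i) / c = g := by
      rw [Nat.mul_comm g c, Nat.mul_add_div hc]
      simp [Nat.div_eq_of_lt hp.2]
    have h2 : (g * c + i) % c = i := by
      rw [Nat.mul_comm g c, Nat.mul_add_mod]
      exact Nat.mod_eq_of_lt hp.2
    simp [h1, h2]
  · intro k _
    simp only
    rw [Nat.mul_comm]
    exact Nat.div_add_mod k c
  · intro p _; rfl

/-- STMT5 -/
theorem stmt_5 (d c m : ℕ) (hd : 1 ≤ d) (hc : 1 ≤ c) (hm : 1 ≤ m) (n : ℕ) (hn : n = m * c)
    (s t : ZMod n → Pt d) (σ : Equiv.Perm (ZMod n)) :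
    ∀ j < c, (1 / (c : ℝ)) * (∑ i ∈ Finset.range n, ‖s (i : ZMod n) - t (i : ZMod n)‖)
      ≤ SOLcost s t σ c m j := by
  intro j hj
  have hcpos : 0 < c := hc
  have hnpos : 0 < n := by rw [hn]; exact Nat.mul_pos hm hc
  haveI : NeZero n := ⟨hnpos.ne'⟩
  set G : ZMod n → ℝ := fun x => ‖s x - t x‖ with hG
  -- rewrite LHS sum
  have hLHS : ∑ i ∈ Finset.range n, ‖s (i : ZMod n) - t (i : ZMod n)‖ = ∑ x : ZMod n, G x :=
    sum_range_cast_zmod n G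
  -- each group's inner sum is ≤ c * lifoCost
  have hgroup : ∀ g ∈ Finset.range m,
      (1 / (c : ℝ)) * ∑ i ∈ Finset.range c, G (σ (groupStart n c j g + (i : ZMod n)))
        ≤ lifoCost s t σ c (groupStart n c j g) := by
    intro g _
    have hsum : ∑ i ∈ Finset.range c, G (σ (groupStart n c j g + (i : ZMod n)))
        ≤ (c : ℝ) * lifoCost s t σ c (groupStart n c j g) := by
      have := Finset.sum_le_card_nsmul (Finset.range c)
        (fun i => G (σ (groupStart n c j g + (i : ZMod n))))
        (lifoCost s t σ c (groupStart n c j g))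
        (fun i hi => lifo_ge s t σ c _ (Finset.mem_range.1 hi))
      simpa [nsmul_eq_mul] using this
    rw [one_div, inv_mul_le_iff₀ (by positivity : (0:ℝ) < (c:ℝ))]
    exact hsum
  -- sum the per-group bounds
  have hstep : ∑ g ∈ Finset.range m,
      (1 / (c : ℝ)) * ∑ i ∈ Finset.range c, G (σ (groupStart n c j g + (i : ZMod n)))
        ≤ SOLcost s t σ c m j := Finset.sum_le_sum hgroup
  -- identify the double sum with the full sum
  have hcastadd : ∀ (g i : ℕ), groupStart n c j g + (i : ZMod n)
      = ((j + 1 : ℕ) : ZMod n) + ((g * c + i : ℕ) : ZMod n) := by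
    intro g i
    unfold groupStart
    push_cast
    ring
  have hdouble : ∑ g ∈ Finset.range m,
      ∑ i ∈ Finset.range c, G (σ (groupStart n c j g + (i : ZMod n))) = ∑ x : ZMod n, G x := by
    have h1 : ∑ g ∈ Finset.range m, ∑ i ∈ Finset.range c,
        G (σ (groupStart n c j g + (i : ZMod n)))
        = ∑ k ∈ Finset.range (m * c), G (σ (((j + 1 : ℕ) : ZMod n) + (k : ZMod n))) := by
      rw [← sum_double_to_range m c hcpos
        (fun k => G (σ (((j + 1 : ℕ) : ZMod n) + (k : ZMod n))))]
      exact Finset.sum_congr rfl fun g _ => Finset.sum_congr rfl fun i _ => by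
        rw [hcastadd g i]
    rw [h1, ← hn,
      sum_range_cast_zmod n (fun x => G (σ (((j + 1 : ℕ) : ZMod n) + x)))]
    exact Equiv.sum_comp ((Equiv.addLeft (((j + 1 : ℕ) : ZMod n))).trans σ) G
  rw [hLHS, ← hdouble, Finset.mul_sum]
  exact hstep
end
end
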